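/- arXiv:0803.1582 — 5 statements merged into one kernel-verified Lean document; each statement's English description precedes it below -/
import Mathlib

section
/- For a connected set 𝓑 of adjacent minors (i.e., the graph G_𝓑 restricted to cells touched by 𝓑 is connected) with r maximal connected row components and c maximal connected column components, the vector space spanned by the indicator vectors of these MCRs and MCCs has dimension r + c − 1; the unique linear relation is that the sum of the MCR indicators equals the sum of the MCC indicators. -/
/-- Indicator vector (in `ℝ^{cells}`) of a finite set of cells. -/
def indF {α : Type*} [DecidableEq α] (S : Finset α) : α → ℝ := fun x => if x ∈ S then 1 else 0

/-- The bipartite incidence graph between a family `R` of maximal connected row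
components and a family `C` of maximal connected column components: `R i` is adjacent to
`C j` when they share a cell. -/
def bipGraph {α : Type*} [DecidableEq α] {r c : ℕ} (R : Fin r → Finset α) (C : Fin c → Finset α) :
    SimpleGraph (Fin r ⊕ Fin c) where
  Adj x y := ∃ i j, (R i ∩ C j).Nonempty ∧
    ((x = Sum.inl i ∧ y = Sum.inr j) ∨ (x = Sum.inr j ∧ y = Sum.inl i))
  symm := by
    constructor
    rintro x y ⟨i, j, hne, (⟨h1, h2⟩ | ⟨h1, h2⟩)⟩
    · exact ⟨i, j, hne, Or.inr ⟨h2, h1⟩⟩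
    · exact ⟨i, j, hne, Or.inl ⟨h2, h1⟩⟩
  loopless := by
    constructor
    rintro x ⟨i, j, hne, (⟨h1, h2⟩ | ⟨h1, h2⟩)⟩ <;> subst h1 <;> simp at h2


section Aux
variable {α : Type*} [DecidableEq α]

lemma sum_smul_indF_apply {r : ℕ} (F : Fin r → Finset α)
    (hF : ∀ x i i', x ∈ F i → x ∈ F i' → i = i') (lam : Fin r → ℝ) (x : α)
    (i : Fin r) (hx : x ∈ F i) :
    (∑ i', lam i' • indF (F i')) x = lam i := by
  rw [Finset.sum_apply, Finset.sum_eq_single i]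
  · simp [indF, hx]
  · intro b _ hb
    simp only [Pi.smul_apply, indF, smul_eq_mul]
    rw [if_neg fun h => hb (hF x b i h hx), mul_zero]
  · simp

lemma sum_smul_indF_apply_of_not_mem {r : ℕ} (F : Fin r → Finset α)
    (lam : Fin r → ℝ) (x : α) (hx : ∀ i, x ∉ F i) :
    (∑ i', lam i' • indF (F i')) x = 0 := by
  rw [Finset.sum_apply]
  exact Finset.sum_eq_zero fun i _ => by simp [indF, hx i]

lemma walk_const {V : Type*} {G : SimpleGraph V} (g : V → ℝ)
    (hadj : ∀ {x y}, G.Adj x y → g x = g y) :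
    ∀ {x y : V}, G.Walk x y → g x = g y := by
  intro x y w
  induction w with
  | nil => rfl
  | cons h _ ih => exact (hadj h).trans ih

end Aux

/-- For a connected set `𝓑` of adjacent minors with maximal connected row components
`R 0, …, R (r-1)` and maximal connected column components `C 0, …, C (c-1)` (each cell
touched by `𝓑` lies in exactly one MCR and one MCC, and the incidence structure is
connected), the span of the indicator vectors of the MCRs and MCCs has dimension
`r + c - 1`, and the only linear relation among them is that the sum of the MCR
indicators equals the sum of the MCC indicators. -/
theorem stmt9 (I J r c : ℕ)
    (R : Fin r → Finset (Fin I × Fin J)) (C : Fin c → Finset (Fin I × Fin J))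
    (hR : ∀ x i i', x ∈ R i → x ∈ R i' → i = i')
    (hC : ∀ x j j', x ∈ C j → x ∈ C j' → j = j')
    (hRC : ∀ x, (∃ i, x ∈ R i) ↔ (∃ j, x ∈ C j))
    (hconn : (bipGraph R C).Connected) :
    Module.finrank ℝ
      (Submodule.span ℝ
        (Set.range (fun i => indF (R i)) ∪ Set.range (fun j => indF (C j)))) =
      r + c - 1 ∧
    (∑ i, indF (R i)) = (∑ j, indF (C j)) ∧
    ∀ (lam : Fin r → ℝ) (mu : Fin c → ℝ),
      (∑ i, lam i • indF (R i)) = (∑ j, mu j • indF (C j)) →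
      ∃ t : ℝ, (∀ i, lam i = t) ∧ (∀ j, mu j = t) := by
  classical
  -- Part 3 (key linear relation uniqueness)
  have key : ∀ (lam : Fin r → ℝ) (mu : Fin c → ℝ),
      (∑ i, lam i • indF (R i)) = (∑ j, mu j • indF (C j)) →
      ∃ t : ℝ, (∀ i, lam i = t) ∧ (∀ j, mu j = t) := by
    intro lam mu h
    set g : Fin r ⊕ Fin c → ℝ := Sum.elim lam mu with hg
    have hadj : ∀ {x y}, (bipGraph R C).Adj x y → g x = g y := by
      rintro x y ⟨i, j, ⟨p, hp⟩, (⟨rfl, rfl⟩ | ⟨rfl, rfl⟩)⟩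
      all_goals
        have hpR : p ∈ R i := (Finset.mem_inter.mp hp).1
        have hpC : p ∈ C j := (Finset.mem_inter.mp hp).2
        have h1 := sum_smul_indF_apply R hR lam p i hpR
        have h2 := sum_smul_indF_apply C hC mu p j hpC
        have h3 : lam i = mu j := by
          rw [← h1, ← h2, h]
      · simpa [hg] using h3
      · simpa [hg] using h3.symm
    have hconst : ∀ x y : Fin r ⊕ Fin c, g x = g y := by
      intro x y
      obtain ⟨w⟩ := hconn x y
      exact walk_const g hadj w
    obtain ⟨v0⟩ := hconn.nonempty
    exact ⟨g v0, fun i => hconst (Sum.inl i) v0, fun j => hconst (Sum.inr j) v0⟩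
  -- Part 2
  have hsum : (∑ i, indF (R i)) = (∑ j, indF (C j)) := by
    funext x
    rw [Finset.sum_apply, Finset.sum_apply]
    by_cases hx : ∃ i, x ∈ R i
    · obtain ⟨i, hi⟩ := hx
      obtain ⟨j, hj⟩ := (hRC x).mp ⟨i, hi⟩
      have h1 := sum_smul_indF_apply R hR (fun _ => (1 : ℝ)) x i hi
      have h2 := sum_smul_indF_apply C hC (fun _ => (1 : ℝ)) x j hj
      simp only [one_smul, Finset.sum_apply] at h1 h2
      rw [h1, h2]
    · have hx' : ∀ j, x ∉ C j := by
        intro j hj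
        exact hx ((hRC x).mpr ⟨j, hj⟩)
      have h1 := sum_smul_indF_apply_of_not_mem R (fun _ => (1 : ℝ)) x
        (fun i hi => hx ⟨i, hi⟩)
      have h2 := sum_smul_indF_apply_of_not_mem C (fun _ => (1 : ℝ)) x hx'
      simp only [one_smul, Finset.sum_apply] at h1 h2
      rw [h1, h2]
  -- Part 1
  refine ⟨?_, hsum, key⟩
  set v : Fin r ⊕ Fin c → ((Fin I × Fin J) → ℝ) :=
    Sum.elim (fun i => indF (R i)) (fun j => indF (C j)) with hv
  set φ : ((Fin r ⊕ Fin c) → ℝ) →ₗ[ℝ] ((Fin I × Fin J) → ℝ) :=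
    Fintype.linearCombination ℝ v with hφ
  have hspan : Submodule.span ℝ
      (Set.range (fun i => indF (R i)) ∪ Set.range (fun j => indF (C j))) =
      LinearMap.range φ := by
    rw [hφ, Fintype.range_linearCombination, hv, Set.Sum.elim_range]
  set e : Fin r ⊕ Fin c → ℝ := Sum.elim (fun _ => (1 : ℝ)) (fun _ => (-1 : ℝ)) with he
  have hφapp : ∀ f : (Fin r ⊕ Fin c) → ℝ,
      φ f = ∑ i, f (Sum.inl i) • indF (R i) + ∑ j, f (Sum.inr j) • indF (C j) := by
    intro f
    rw [hφ, Fintype.linearCombination_apply, Fintype.sum_sum_type]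
    simp [hv]
  have hker : LinearMap.ker φ = Submodule.span ℝ {e} := by
    apply le_antisymm
    · intro f hf
      rw [LinearMap.mem_ker, hφapp] at hf
      have hrel : (∑ i, f (Sum.inl i) • indF (R i)) =
          (∑ j, (-(f (Sum.inr j))) • indF (C j)) := by
        have := eq_neg_of_add_eq_zero_left hf
        rw [this, ← Finset.sum_neg_distrib]
        exact Finset.sum_congr rfl fun j _ => (neg_smul _ _).symm
      obtain ⟨t, ht1, ht2⟩ := key _ _ hrel
      rw [Submodule.mem_span_singleton]
      refine ⟨t, ?_⟩
      funext x
      cases x with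
      | inl i => simp [he, ht1 i]
      | inr j =>
        have := ht2 j
        simp only [he, Pi.smul_apply, Sum.elim_inr, smul_eq_mul, mul_neg_one]
        linarith
    · rw [Submodule.span_singleton_le_iff_mem, LinearMap.mem_ker, hφapp]
      simp only [he, Sum.elim_inl, Sum.elim_inr, one_smul, neg_one_smul]
      rw [Finset.sum_neg_distrib, hsum]
      simp
  have hne : e ≠ 0 := by
    obtain ⟨v0⟩ := hconn.nonempty
    intro h0
    cases v0 with
    | inl i => have := congrFun h0 (Sum.inl i); simp [he] at this
    | inr j => have := congrFun h0 (Sum.inr j); simp [he] at this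
  have hrank := LinearMap.finrank_range_add_finrank_ker φ
  rw [hker, finrank_span_singleton hne, Module.finrank_pi, Fintype.card_sum,
    Fintype.card_fin, Fintype.card_fin] at hrank
  rw [hspan]
  omega
end

section
/- Let 𝓑 be a set of adjacent minors whose graph has k connected components, with r MCRs, c MCCs and f free cells in total. Then the vector space spanned by the indicator vectors of the MCRs, the MCCs and the free cells has dimension r + c + f − k. -/
section Aux

lemma sum_ite_unique {ι α : Type*} [Fintype ι] [DecidableEq α] (S : ι → Finset α)
    (huniq : ∀ x i i', x ∈ S i → x ∈ S i' → i = i') (a : ι → ℝ) (x : α) (i₀ : ι)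
    (hx : x ∈ S i₀) :
    ∑ i, (if x ∈ S i then a i else 0) = a i₀ := by
  rw [Finset.sum_eq_single i₀]
  · simp [hx]
  · intro b _ hb; rw [if_neg]; intro h; exact hb (huniq x b i₀ h hx)
  · simp

lemma sum_ite_zero' {ι α : Type*} [Fintype ι] [DecidableEq α] (S : ι → Finset α) (a : ι → ℝ) (x : α)
    (hx : ∀ i, x ∉ S i) :
    ∑ i, (if x ∈ S i then a i else 0) = 0 := by
  apply Finset.sum_eq_zero; intro i _; rw [if_neg (hx i)]

lemma walk_const_s10 {V : Type*} {β : Sort*} {G : SimpleGraph V} (f : V → β)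
    (h : ∀ v w, G.Adj v w → f v = f w) {v w : V} (p : G.Walk v w) : f v = f w := by
  induction p with
  | nil => rfl
  | cons hadj _ ih => exact (h _ _ hadj).trans ih

end Aux

/-- For a set `𝓑` of adjacent minors whose graph has `k` connected components, with
MCRs `R 0, …, R (r-1)`, MCCs `C 0, …, C (c-1)` and free cells `F 0, …, F (f-1)`, the
span of the indicator vectors of the MCRs, the MCCs and the free cells has dimension
`r + c + f - k`. -/
theorem stmt10 (I J r c f k : ℕ)
    (R : Fin r → Finset (Fin I × Fin J)) (C : Fin c → Finset (Fin I × Fin J))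
    (F : Fin f → Fin I × Fin J)
    (hR : ∀ x i i', x ∈ R i → x ∈ R i' → i = i')
    (hC : ∀ x j j', x ∈ C j → x ∈ C j' → j = j')
    (hRC : ∀ x, (∃ i, x ∈ R i) ↔ (∃ j, x ∈ C j))
    (hF : Function.Injective F)
    (hFR : ∀ t i, F t ∉ R i) (hFC : ∀ t j, F t ∉ C j)
    (hk : Nat.card (bipGraph R C).ConnectedComponent = k) :
    Module.finrank ℝ
      (Submodule.span ℝ
        (Set.range (fun i => indF (R i)) ∪ Set.range (fun j => indF (C j)) ∪
          Set.range (fun t => (fun x => if x = F t then (1 : ℝ) else 0)))) =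
      r + c + f - k := by
  classical
  set G := bipGraph R C with hG
  set vec : (Fin r ⊕ Fin c ⊕ Fin f) → (Fin I × Fin J → ℝ) :=
    Sum.elim (fun i => indF (R i))
      (Sum.elim (fun j => indF (C j)) (fun t => fun x => if x = F t then (1 : ℝ) else 0))
    with hvec
  set L := Fintype.linearCombination ℝ vec with hL
  -- evaluation formula
  have hLval : ∀ (a : (Fin r ⊕ Fin c ⊕ Fin f) → ℝ) (x : Fin I × Fin J),
      L a x = (∑ i, if x ∈ R i then a (Sum.inl i) else 0) +
        ((∑ j, if x ∈ C j then a (Sum.inr (Sum.inl j)) else 0) +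
          (∑ t, if x = F t then a (Sum.inr (Sum.inr t)) else 0)) := by
    intro a x
    rw [hL, Fintype.linearCombination_apply]
    simp only [Finset.sum_apply, Pi.smul_apply, hvec, Fintype.sum_sum_type,
      Sum.elim_inl, Sum.elim_inr, indF, smul_eq_mul, mul_ite, mul_one, mul_zero]
  -- component map
  set cm : (Fin r ⊕ Fin c) → G.ConnectedComponent := G.connectedComponentMk with hcm
  -- the linear map from component functions into the domain
  have hadjRC : ∀ i j (x : Fin I × Fin J), x ∈ R i → x ∈ C j → G.Adj (Sum.inl i) (Sum.inr j) := by
    intro i j x hxR hxC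
    exact ⟨i, j, ⟨x, Finset.mem_inter.2 ⟨hxR, hxC⟩⟩, Or.inl ⟨rfl, rfl⟩⟩
  set Φfun : (G.ConnectedComponent → ℝ) → ((Fin r ⊕ Fin c ⊕ Fin f) → ℝ) :=
    fun u => Sum.elim (fun i => u (cm (Sum.inl i)))
      (Sum.elim (fun j => -u (cm (Sum.inr j))) (fun _ => 0)) with hΦfun
  have hΦadd : ∀ u u', Φfun (u + u') = Φfun u + Φfun u' := by
    intro u u'; funext z
    rcases z with i | j | t <;> simp [hΦfun] <;> ring
  have hΦsmul : ∀ (a : ℝ) u, Φfun (a • u) = a • Φfun u := by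
    intro a u; funext z
    rcases z with i | j | t <;> simp [hΦfun] <;> ring
  set Φ : (G.ConnectedComponent → ℝ) →ₗ[ℝ] ((Fin r ⊕ Fin c ⊕ Fin f) → ℝ) :=
    ⟨⟨Φfun, hΦadd⟩, hΦsmul⟩ with hΦ
  have hΦapp : ∀ u z, Φ u z = Φfun u z := fun _ _ => rfl
  -- injectivity of Φ
  have hinj : Function.Injective Φ := by
    intro u u' h
    funext comp
    induction comp using SimpleGraph.ConnectedComponent.ind with
    | _ v =>
      rcases v with i | j
      · have := congrFun (congrArg (fun w => w) h) (Sum.inl i)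
        simpa [hΦapp, hΦfun] using this
      · have := congrFun (congrArg (fun w => w) h) (Sum.inr (Sum.inl j))
        simpa [hΦapp, hΦfun, neg_inj] using this
  -- range Φ = ker L
  have hrange : LinearMap.range Φ = LinearMap.ker L := by
    apply le_antisymm
    · rintro _ ⟨u, rfl⟩
      rw [LinearMap.mem_ker]
      funext x
      rw [hLval]
      have hfree : (∑ t, if x = F t then (Φ u) (Sum.inr (Sum.inr t)) else 0) = 0 := by
        apply Finset.sum_eq_zero; intro t _
        simp [hΦapp, hΦfun]
      by_cases hx : ∃ i, x ∈ R i
      · obtain ⟨i, hxR⟩ := hx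
        obtain ⟨j, hxC⟩ := (hRC x).1 ⟨i, hxR⟩
        rw [sum_ite_unique R hR _ x i hxR, sum_ite_unique C hC _ x j hxC, hfree]
        have hcomp : cm (Sum.inl i) = cm (Sum.inr j) :=
          SimpleGraph.ConnectedComponent.sound (hadjRC i j x hxR hxC).reachable
        simp [hΦapp, hΦfun, hcomp]
      · have hxC : ∀ j, x ∉ C j := by
          intro j hj; exact hx ((hRC x).2 ⟨j, hj⟩)
        rw [sum_ite_zero' R _ x (fun i hi => hx ⟨i, hi⟩),
          sum_ite_zero' C _ x hxC, hfree]
        simp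
    · intro v hv
      rw [LinearMap.mem_ker] at hv
      set g : (Fin r ⊕ Fin c) → ℝ :=
        Sum.elim (fun i => v (Sum.inl i)) (fun j => -v (Sum.inr (Sum.inl j))) with hg
      have hedge : ∀ a b, G.Adj a b → g a = g b := by
        have key : ∀ i j (x : Fin I × Fin J), x ∈ R i → x ∈ C j →
            v (Sum.inl i) + v (Sum.inr (Sum.inl j)) = 0 := by
          intro i j x hxR hxC
          have h0 := congrFun hv x
          rw [hLval] at h0
          rw [sum_ite_unique R hR _ x i hxR, sum_ite_unique C hC _ x j hxC] at h0
          have hfree : (∑ t, if x = F t then v (Sum.inr (Sum.inr t)) else 0) = 0 := by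
            apply Finset.sum_eq_zero; intro t _
            rw [if_neg]; rintro rfl; exact hFR t i hxR
          rw [hfree] at h0
          simpa using h0
        rintro a b ⟨i, j, ⟨x, hx⟩, (⟨rfl, rfl⟩ | ⟨rfl, rfl⟩)⟩ <;>
          obtain ⟨hxR, hxC⟩ := Finset.mem_inter.1 hx
        · have := key i j x hxR hxC
          simp only [hg, Sum.elim_inl, Sum.elim_inr]; linarith
        · have := key i j x hxR hxC
          simp only [hg, Sum.elim_inl, Sum.elim_inr]; linarith
      set u : G.ConnectedComponent → ℝ :=
        SimpleGraph.ConnectedComponent.lift g (fun a b p _ => walk_const_s10 g hedge p) with hu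
      refine ⟨u, ?_⟩
      funext z
      rcases z with i | j | t
      · simp [hΦapp, hΦfun, hu, hcm, hg]
      · simp [hΦapp, hΦfun, hu, hcm, hg]
      · have h0 := congrFun hv (F t)
        rw [hLval] at h0
        rw [sum_ite_zero' R _ (F t) (fun i => hFR t i),
          sum_ite_zero' C _ (F t) (fun j => hFC t j)] at h0
        have hfree : (∑ s, if F t = F s then v (Sum.inr (Sum.inr s)) else 0)
            = v (Sum.inr (Sum.inr t)) := by
          rw [Finset.sum_eq_single t]
          · simp
          · intro s _ hs; rw [if_neg]; intro h; exact hs (hF h.symm)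
          · simp
        rw [hfree] at h0
        simp only [Pi.zero_apply] at h0
        simp only [hΦapp, hΦfun, Sum.elim_inr]
        linarith
  -- dimension of the kernel
  haveI : Fintype G.ConnectedComponent := Fintype.ofFinite _
  have hker : Module.finrank ℝ (LinearMap.ker L) = k := by
    have e := (LinearEquiv.ofInjective Φ hinj).finrank_eq
    rw [hrange] at e
    rw [← e, Module.finrank_pi, ← Nat.card_eq_fintype_card, hk]
  -- rank-nullity
  have hrn := LinearMap.finrank_range_add_finrank_ker L
  have hdom : Module.finrank ℝ ((Fin r ⊕ Fin c ⊕ Fin f) → ℝ) = r + (c + f) := by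
    rw [Module.finrank_pi]; simp
  have hspan : LinearMap.range L = Submodule.span ℝ
      (Set.range (fun i => indF (R i)) ∪ Set.range (fun j => indF (C j)) ∪
        Set.range (fun t => (fun x => if x = F t then (1 : ℝ) else 0))) := by
    rw [hL, Fintype.range_linearCombination, hvec]
    congr 1
    rw [Set.Sum.elim_range, Set.Sum.elim_range, Set.union_assoc]
  rw [← hspan]
  rw [hker, hdom] at hrn
  omega
end

section
/- The 4×4 matrix P_g with entries 3/40 in the blocks {1,2}×{1,2} and {3,4}×{3,4} and entries 2/40 elsewhere has rank 2, has all entries summing to 1, and satisfies the adjacent-minor equations p_{i,j}p_{i+1,j+1} = p_{i+1,j}p_{i,j+1} for all (i,j) except (2,2) (the central minor). -/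
/-- The matrix `P_g = (1/40)·[[3,3,2,2],[3,3,2,2],[2,2,3,3],[2,2,3,3]]` (0-indexed). -/
noncomputable def Pg : Matrix (Fin 4) (Fin 4) ℝ := fun i j =>
  if (i.1 < 2 ∧ j.1 < 2) ∨ (2 ≤ i.1 ∧ 2 ≤ j.1) then 3 / 40 else 2 / 40

noncomputable def PgA : Matrix (Fin 4) (Fin 2) ℝ := !![1,0;1,0;0,1;0,1]
noncomputable def PgB : Matrix (Fin 2) (Fin 4) ℝ :=
  !![3/40,3/40,2/40,2/40; 2/40,2/40,3/40,3/40]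
noncomputable def PgF : Matrix (Fin 2) (Fin 4) ℝ := !![1,0,0,0;0,0,1,0]
noncomputable def PgG : Matrix (Fin 4) (Fin 2) ℝ := !![1,0;0,0;0,1;0,0]

lemma Pg_factor : Pg = PgA * PgB := by
  ext i j
  fin_cases i <;> fin_cases j <;>
    norm_num [Pg, PgA, PgB, Matrix.mul_apply, Fin.sum_univ_four, Matrix.cons_val_zero,
      Matrix.cons_val_one, Matrix.head_cons, Matrix.cons_val_two, Matrix.cons_val_three,
      Matrix.tail_cons]

lemma Pg_sub : PgF * Pg * PgG = !![3/40, 2/40; 2/40, 3/40] := by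
  ext i j
  fin_cases i <;> fin_cases j <;>
    norm_num [Pg, PgF, PgG, Matrix.mul_apply, Fin.sum_univ_four, Matrix.cons_val_zero,
      Matrix.cons_val_one, Matrix.head_cons, Matrix.cons_val_two, Matrix.cons_val_three,
      Matrix.tail_cons, Matrix.vecMul, dotProduct, Matrix.vecHead, Matrix.vecTail]

lemma Pg_rank : Pg.rank = 2 := by
  have hle : Pg.rank ≤ 2 := by
    rw [Pg_factor]
    calc (PgA * PgB).rank ≤ PgB.rank := Matrix.rank_mul_le_right _ _
      _ ≤ 2 := by simpa using PgB.rank_le_card_height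
  have hge : 2 ≤ Pg.rank := by
    have hC : (!![3/40, 2/40; 2/40, 3/40] : Matrix (Fin 2) (Fin 2) ℝ).rank = 2 := by
      apply Matrix.rank_of_isUnit
      rw [Matrix.isUnit_iff_isUnit_det]
      simp [Matrix.det_fin_two_of]
      norm_num
    calc (2 : ℕ) = (!![3/40, 2/40; 2/40, 3/40] : Matrix (Fin 2) (Fin 2) ℝ).rank := hC.symm
      _ = (PgF * Pg * PgG).rank := by rw [Pg_sub]
      _ ≤ (PgF * Pg).rank := Matrix.rank_mul_le_left _ _
      _ ≤ Pg.rank := Matrix.rank_mul_le_right _ _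
  omega

/-- `P_g` has rank 2, its entries sum to 1, and it satisfies all adjacent-minor
equations except the central one (the minor at `(2,2)` in 1-indexing, i.e. `(1,1)`
in 0-indexing). -/
theorem stmt16 :
    Pg.rank = 2 ∧
    (∑ i : Fin 4, ∑ j : Fin 4, Pg i j) = 1 ∧
    ∀ (a b : ℕ) (ha : a + 1 < 4) (hb : b + 1 < 4), ¬(a = 1 ∧ b = 1) →
      Pg ⟨a, Nat.lt_of_succ_lt ha⟩ ⟨b, Nat.lt_of_succ_lt hb⟩ * Pg ⟨a + 1, ha⟩ ⟨b + 1, hb⟩ =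
        Pg ⟨a + 1, ha⟩ ⟨b, Nat.lt_of_succ_lt hb⟩ *
          Pg ⟨a, Nat.lt_of_succ_lt ha⟩ ⟨b + 1, hb⟩ := by
  refine ⟨Pg_rank, ?_, ?_⟩
  · simp [Pg, Fin.sum_univ_succ]
    norm_num
  · intro a b ha hb h
    have ha' : a ≤ 2 := by omega
    have hb' : b ≤ 2 := by omega
    interval_cases a <;> interval_cases b <;> simp_all [Pg] <;> norm_num
end

section
/- The 4×4 matrix P_l with entries 8/120 in the block {1,2,3}×{1,2,3}, entries 6/120 in positions (i,4) and (4,j) for i,j ≤ 3, and entry 12/120 at (4,4), has rank 2, entries summing to 1, and satisfies the adjacent-minor equations for all adjacent minors except the one at position (3,3). -/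
/-- The matrix `P_l = (1/120)·[[8,8,8,6],[8,8,8,6],[8,8,8,6],[6,6,6,12]]` (0-indexed). -/
noncomputable def Pl : Matrix (Fin 4) (Fin 4) ℝ := fun i j =>
  if i.1 < 3 ∧ j.1 < 3 then 8 / 120
  else if i.1 = 3 ∧ j.1 = 3 then 12 / 120
  else 6 / 120

noncomputable def B : Matrix (Fin 4) (Fin 2) ℝ := !![1,0;1,0;1,0;0,1]
noncomputable def C : Matrix (Fin 2) (Fin 4) ℝ :=
  !![8/120,8/120,8/120,6/120;6/120,6/120,6/120,12/120]
noncomputable def E : Matrix (Fin 2) (Fin 4) ℝ := !![1,0,0,0;0,0,0,1]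
noncomputable def F : Matrix (Fin 4) (Fin 2) ℝ := !![1,0;0,0;0,0;0,1]

lemma hBC : Pl = B * C := by
  ext i j
  fin_cases i <;> fin_cases j <;>
    simp [Pl, B, C, Matrix.mul_apply, Fin.sum_univ_succ]

lemma hEPF : E * (Pl * F) = !![8/120, 6/120; 6/120, 12/120] := by
  ext i j
  fin_cases i <;> fin_cases j <;>
    simp [Pl, E, F, Matrix.mul_apply, Fin.sum_univ_succ]

lemma rankPl : Pl.rank = 2 := by
  have h1 : Pl.rank ≤ 2 := by
    rw [hBC]
    exact le_trans (Matrix.rank_mul_le_right B C)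
      (by simpa using Matrix.rank_le_card_height C)
  have h2 : (2 : ℕ) ≤ Pl.rank := by
    have hu : IsUnit (!![8/120, 6/120; 6/120, 12/120] : Matrix (Fin 2) (Fin 2) ℝ) := by
      rw [Matrix.isUnit_iff_isUnit_det, Matrix.det_fin_two]
      norm_num
    have := Matrix.rank_of_isUnit _ hu
    calc (2 : ℕ) = (!![8/120, 6/120; 6/120, 12/120] : Matrix (Fin 2) (Fin 2) ℝ).rank := by
          simp [this]
      _ = (E * (Pl * F)).rank := by rw [hEPF]
      _ ≤ (Pl * F).rank := Matrix.rank_mul_le_right _ _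
      _ ≤ Pl.rank := Matrix.rank_mul_le_left _ _
  omega

/-- `P_l` has rank 2, its entries sum to 1, and it satisfies all adjacent-minor
equations except the one at position `(3,3)` in 1-indexing (i.e. `(2,2)` in
0-indexing). -/
theorem stmt17 :
    Pl.rank = 2 ∧
    (∑ i : Fin 4, ∑ j : Fin 4, Pl i j) = 1 ∧
    ∀ (a b : ℕ) (ha : a + 1 < 4) (hb : b + 1 < 4), ¬(a = 2 ∧ b = 2) →
      Pl ⟨a, Nat.lt_of_succ_lt ha⟩ ⟨b, Nat.lt_of_succ_lt hb⟩ * Pl ⟨a + 1, ha⟩ ⟨b + 1, hb⟩ =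
        Pl ⟨a + 1, ha⟩ ⟨b, Nat.lt_of_succ_lt hb⟩ *
          Pl ⟨a, Nat.lt_of_succ_lt ha⟩ ⟨b + 1, hb⟩ := by
  refine ⟨rankPl, ?_, ?_⟩
  · simp [Pl, Fin.sum_univ_four, show ((3:Fin 4)).1 = 3 from rfl]
    norm_num
  · intro a b ha hb hne
    have ha' : a ≤ 2 := by omega
    have hb' : b ≤ 2 := by omega
    interval_cases a <;> interval_cases b <;> simp_all <;> norm_num [Pl]
end

section
/- If h₁ and h₂ are nonnegative-integer I×J tables with equal row sums and equal column sums, then h₂ can be obtained from h₁ by a finite sequence of basic moves ± e_{(i,j)} + e_{(k,m)} − e_{(i,m)} − e_{(k,j)} (i<k, j<m, using arbitrary, not necessarily adjacent, pairs of rows and columns) such that all intermediate tables are nonnegative. -/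
/-- The basic move at rows `i < k` and columns `j < m`: add 1 to entries `(i,j)` and
`(k,m)` and subtract 1 from entries `(i,m)` and `(k,j)`. -/
def basicMove {I J : ℕ} (i k : Fin I) (j m : Fin J) : Fin I × Fin J → ℤ := fun x =>
  (if x = (i, j) then 1 else 0) + (if x = (k, m) then 1 else 0) -
    (if x = (i, m) then 1 else 0) - (if x = (k, j) then 1 else 0)

lemma mbStep (I J : ℕ) (h₁ h₂ : Fin I × Fin J → ℤ)
    (hpos₁ : ∀ x, 0 ≤ h₁ x) (hpos₂ : ∀ x, 0 ≤ h₂ x)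
    (hrow : ∀ i : Fin I, ∑ j : Fin J, h₁ (i, j) = ∑ j : Fin J, h₂ (i, j))
    (hcol : ∀ j : Fin J, ∑ i : Fin I, h₁ (i, j) = ∑ i : Fin I, h₂ (i, j))
    (hne : h₁ ≠ h₂) :
    ∃ h₁' : Fin I × Fin J → ℤ,
      (∀ x, 0 ≤ h₁' x) ∧
      (∀ i : Fin I, ∑ j : Fin J, h₁' (i, j) = ∑ j : Fin J, h₂ (i, j)) ∧
      (∀ j : Fin J, ∑ i : Fin I, h₁' (i, j) = ∑ i : Fin I, h₂ (i, j)) ∧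
      (∑ x, (h₁' x - h₂ x).natAbs) < (∑ x, (h₁ x - h₂ x).natAbs) ∧
      ∃ (i k : Fin I) (j m : Fin J) (ε : ℤ), i < k ∧ j < m ∧ (ε = 1 ∨ ε = -1) ∧
        h₁' = fun x => h₁ x + ε * basicMove i k j m x := by
  have htot : (∑ x : Fin I × Fin J, h₁ x) = ∑ x : Fin I × Fin J, h₂ x := by
    rw [Fintype.sum_prod_type, Fintype.sum_prod_type]
    exact Finset.sum_congr rfl fun i _ => hrow i
  have hex : ∃ p : Fin I × Fin J, h₂ p < h₁ p := by
    by_contra hc; push_neg at hc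
    obtain ⟨x₀, hx₀⟩ := Function.ne_iff.mp hne
    have : ∑ x : Fin I × Fin J, h₁ x < ∑ x : Fin I × Fin J, h₂ x :=
      Finset.sum_lt_sum (fun x _ => hc x) ⟨x₀, Finset.mem_univ _, lt_of_le_of_ne (hc x₀) hx₀⟩
    omega
  obtain ⟨⟨i, j⟩, hij⟩ := hex
  have hm : ∃ m, h₁ (i, m) < h₂ (i, m) := by
    by_contra hc; push_neg at hc
    have : ∑ jj : Fin J, h₂ (i, jj) < ∑ jj : Fin J, h₁ (i, jj) :=
      Finset.sum_lt_sum (fun jj _ => hc jj) ⟨j, Finset.mem_univ _, hij⟩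
    have := hrow i; omega
  obtain ⟨m, him⟩ := hm
  have hjm : j ≠ m := by rintro rfl; omega
  have hk : ∃ k, h₂ (k, m) < h₁ (k, m) := by
    by_contra hc; push_neg at hc
    have : ∑ ii : Fin I, h₁ (ii, m) < ∑ ii : Fin I, h₂ (ii, m) :=
      Finset.sum_lt_sum (fun ii _ => hc ii) ⟨i, Finset.mem_univ _, him⟩
    have := hcol m; omega
  obtain ⟨k, hkm⟩ := hk
  have hik : i ≠ k := by rintro rfl; omega
  set h₁' : Fin I × Fin J → ℤ := fun x =>
    h₁ x + ((if x = (i, m) then 1 else 0) + (if x = (k, j) then 1 else 0) -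
      (if x = (i, j) then 1 else 0) - (if x = (k, m) then 1 else 0)) with hdef
  have hv1 : h₁' (i, j) = h₁ (i, j) - 1 := by
    simp [hdef, Prod.ext_iff, hjm, hik, Ne.symm hjm, Ne.symm hik]; ring
  have hv2 : h₁' (i, m) = h₁ (i, m) + 1 := by
    simp [hdef, Prod.ext_iff, hjm, hik, Ne.symm hjm, Ne.symm hik]
  have hv3 : h₁' (k, j) = h₁ (k, j) + 1 := by
    simp [hdef, Prod.ext_iff, hjm, hik, Ne.symm hjm, Ne.symm hik]
  have hv4 : h₁' (k, m) = h₁ (k, m) - 1 := by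
    simp [hdef, Prod.ext_iff, hjm, hik, Ne.symm hjm, Ne.symm hik]; ring
  have hv0 : ∀ x, x ≠ (i, j) → x ≠ (i, m) → x ≠ (k, j) → x ≠ (k, m) → h₁' x = h₁ x := by
    intro x hx1 hx2 hx3 hx4
    simp [hdef, hx1, hx2, hx3, hx4]
  have hpos' : ∀ x, 0 ≤ h₁' x := by
    intro x
    rcases eq_or_ne x (i, j) with rfl | hx1
    · rw [hv1]; have := hpos₂ (i, j); omega
    rcases eq_or_ne x (i, m) with rfl | hx2
    · rw [hv2]; have := hpos₁ (i, m); omega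
    rcases eq_or_ne x (k, j) with rfl | hx3
    · rw [hv3]; have := hpos₁ (k, j); omega
    rcases eq_or_ne x (k, m) with rfl | hx4
    · rw [hv4]; have := hpos₂ (k, m); omega
    · rw [hv0 x hx1 hx2 hx3 hx4]; exact hpos₁ x
  have hsumr : ∀ (r : Fin I) (a : Fin I) (b : Fin J),
      (∑ jj : Fin J, (if (r, jj) = (a, b) then (1 : ℤ) else 0)) = if r = a then 1 else 0 := by
    intro r a b
    rcases eq_or_ne r a with rfl | hr
    · simp [Prod.ext_iff]
    · simp [Prod.ext_iff, hr]
  have hsumc : ∀ (c : Fin J) (a : Fin I) (b : Fin J),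
      (∑ ii : Fin I, (if (ii, c) = (a, b) then (1 : ℤ) else 0)) = if c = b then 1 else 0 := by
    intro c a b
    rcases eq_or_ne c b with rfl | hc
    · simp [Prod.ext_iff]
    · simp [Prod.ext_iff, hc]
  have hrow' : ∀ r : Fin I, ∑ jj : Fin J, h₁' (r, jj) = ∑ jj : Fin J, h₂ (r, jj) := by
    intro r
    simp only [hdef]
    rw [Finset.sum_add_distrib]
    simp only [Finset.sum_sub_distrib, Finset.sum_add_distrib, hsumr]
    rw [hrow r]; ring
  have hcol' : ∀ c : Fin J, ∑ ii : Fin I, h₁' (ii, c) = ∑ ii : Fin I, h₂ (ii, c) := by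
    intro c
    simp only [hdef]
    rw [Finset.sum_add_distrib]
    simp only [Finset.sum_sub_distrib, Finset.sum_add_distrib, hsumc]
    rw [hcol c]; ring
  have hd12 : ((i, j) : Fin I × Fin J) ≠ (i, m) := by simp [Prod.ext_iff, hjm]
  have hd13 : ((i, j) : Fin I × Fin J) ≠ (k, j) := by simp [Prod.ext_iff, hik]
  have hd14 : ((i, j) : Fin I × Fin J) ≠ (k, m) := by simp [Prod.ext_iff, hik]
  have hd23 : ((i, m) : Fin I × Fin J) ≠ (k, j) := by simp [Prod.ext_iff, hik]
  have hd24 : ((i, m) : Fin I × Fin J) ≠ (k, m) := by simp [Prod.ext_iff, hik]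
  have hd34 : ((k, j) : Fin I × Fin J) ≠ (k, m) := by simp [Prod.ext_iff, hjm]
  have hlt : (∑ x, (h₁' x - h₂ x).natAbs) < ∑ x, (h₁ x - h₂ x).natAbs := by
    classical
    set S : Finset (Fin I × Fin J) := {(i, j), (i, m), (k, j), (k, m)} with hS
    have hkey : ∀ f : (Fin I × Fin J) → ℕ,
        ∑ x, f x = ∑ x ∈ Finset.univ \ S, f x + ∑ x ∈ S, f x :=
      fun f => (Finset.sum_sdiff (Finset.subset_univ S)).symm
    have hco : ∑ x ∈ Finset.univ \ S, (h₁' x - h₂ x).natAbs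
        = ∑ x ∈ Finset.univ \ S, (h₁ x - h₂ x).natAbs := by
      refine Finset.sum_congr rfl fun x hx => ?_
      simp only [hS, Finset.mem_sdiff, Finset.mem_insert, Finset.mem_singleton,
        Finset.mem_univ, true_and, not_or] at hx
      rw [hv0 x hx.1 hx.2.1 hx.2.2.1 hx.2.2.2]
    have hs1 : ((i, j) : Fin I × Fin J) ∉ ({(i, m), (k, j), (k, m)} : Finset (Fin I × Fin J)) := by
      simp [hd12, hd13, hd14]
    have hs2 : ((i, m) : Fin I × Fin J) ∉ ({(k, j), (k, m)} : Finset (Fin I × Fin J)) := by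
      simp [hd23, hd24]
    have hs3 : ((k, j) : Fin I × Fin J) ∉ ({(k, m)} : Finset (Fin I × Fin J)) := by
      simp [hd34]
    have hSsum : ∀ f : (Fin I × Fin J) → ℕ,
        ∑ x ∈ S, f x = f (i, j) + (f (i, m) + (f (k, j) + f (k, m))) := by
      intro f
      rw [hS, Finset.sum_insert hs1, Finset.sum_insert hs2, Finset.sum_insert hs3,
        Finset.sum_singleton]
    rw [hkey, hkey (fun x => (h₁ x - h₂ x).natAbs), hco, hSsum, hSsum]
    have := hv1; have := hv2; have := hv3; have := hv4
    rw [hv1, hv2, hv3, hv4]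
    omega
  refine ⟨h₁', hpos', hrow', hcol', hlt, ?_⟩
  rcases lt_or_gt_of_ne hik with hik' | hik' <;> rcases lt_or_gt_of_ne hjm with hjm' | hjm'
  · exact ⟨i, k, j, m, -1, hik', hjm', Or.inr rfl, by
      funext x; simp only [hdef, basicMove]; ring⟩
  · exact ⟨i, k, m, j, 1, hik', hjm', Or.inl rfl, by
      funext x; simp only [hdef, basicMove]; ring⟩
  · exact ⟨k, i, j, m, 1, hik', hjm', Or.inl rfl, by
      funext x; simp only [hdef, basicMove]; ring⟩
  · exact ⟨k, i, m, j, -1, hik', hjm', Or.inr rfl, by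
      funext x; simp only [hdef, basicMove]; ring⟩

/-- Markov-basis connectivity for the independence model: any two nonnegative integer
tables with the same row sums and the same column sums are connected by a finite
sequence of (±) basic moves keeping all intermediate tables nonnegative. -/
theorem stmt19 (I J : ℕ) (h₁ h₂ : Fin I × Fin J → ℤ)
    (hpos₁ : ∀ x, 0 ≤ h₁ x) (hpos₂ : ∀ x, 0 ≤ h₂ x)
    (hrow : ∀ i : Fin I, ∑ j : Fin J, h₁ (i, j) = ∑ j : Fin J, h₂ (i, j))
    (hcol : ∀ j : Fin J, ∑ i : Fin I, h₁ (i, j) = ∑ i : Fin I, h₂ (i, j)) :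
    ∃ (n : ℕ) (g : ℕ → Fin I × Fin J → ℤ),
      g 0 = h₁ ∧ g n = h₂ ∧
      (∀ t ≤ n, ∀ x, 0 ≤ g t x) ∧
      ∀ t < n, ∃ (i k : Fin I) (j m : Fin J) (ε : ℤ),
        i < k ∧ j < m ∧ (ε = 1 ∨ ε = -1) ∧
        g (t + 1) = fun x => g t x + ε * basicMove i k j m x := by
  suffices H : ∀ (N : ℕ) (f : Fin I × Fin J → ℤ), (∑ x, (f x - h₂ x).natAbs) = N →
      (∀ x, 0 ≤ f x) →
      (∀ i : Fin I, ∑ j : Fin J, f (i, j) = ∑ j : Fin J, h₂ (i, j)) →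
      (∀ j : Fin J, ∑ i : Fin I, f (i, j) = ∑ i : Fin I, h₂ (i, j)) →
      ∃ (n : ℕ) (g : ℕ → Fin I × Fin J → ℤ),
        g 0 = f ∧ g n = h₂ ∧
        (∀ t ≤ n, ∀ x, 0 ≤ g t x) ∧
        ∀ t < n, ∃ (i k : Fin I) (j m : Fin J) (ε : ℤ),
          i < k ∧ j < m ∧ (ε = 1 ∨ ε = -1) ∧
          g (t + 1) = fun x => g t x + ε * basicMove i k j m x by
    exact H _ h₁ rfl hpos₁ hrow hcol
  intro N
  induction N using Nat.strong_induction_on with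
  | _ N ih =>
    intro f hN hp hr hc
    by_cases heq : f = h₂
    · exact ⟨0, fun _ => f, rfl, heq, fun t _ x => hp x, fun t ht => absurd ht (by omega)⟩
    · obtain ⟨f', hp', hr', hc', hlt, i, k, j, m, ε, hik, hjm, hε, hfeq⟩ :=
        mbStep I J f h₂ hp hpos₂ hr hc heq
      obtain ⟨n, g, hg0, hgn, hgpos, hgstep⟩ :=
        ih (∑ x, (f' x - h₂ x).natAbs) (by omega) f' rfl hp' hr' hc'
      refine ⟨n + 1, fun t => if t = 0 then f else g (t - 1), by simp, by simp [hgn], ?_, ?_⟩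
      · intro t ht x
        rcases Nat.eq_zero_or_pos t with rfl | htpos
        · simpa using hp x
        · simp only [if_neg (Nat.pos_iff_ne_zero.mp htpos)]
          exact hgpos (t - 1) (by omega) x
      · intro t ht
        rcases Nat.eq_zero_or_pos t with rfl | htpos
        · refine ⟨i, k, j, m, ε, hik, hjm, hε, ?_⟩
          simpa using hg0 ▸ hfeq
        · obtain ⟨i', k', j', m', ε', h1, h2, h3, h4⟩ := hgstep (t - 1) (by omega)
          refine ⟨i', k', j', m', ε', h1, h2, h3, ?_⟩
          have : t - 1 + 1 = t := by omega
          simp only [if_neg (by omega : ¬ t + 1 = 0), if_neg (Nat.pos_iff_ne_zero.mp htpos)]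
          rw [show t + 1 - 1 = t - 1 + 1 by omega, h4]
end
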